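/- The truncated tetrahedron graph is not 5-gonal: there exist five vertices a, b, c, x, y such that d(x,y) + d(a,b) + d(a,c) + d(b,c) > d(x,a) + d(x,b) + d(x,c) + d(y,a) + d(y,b) + d(y,c), where d is the graph distance. Consequently, the truncated tetrahedron graph admits no embedding with any scale λ ≥ 1 into any ℤ^n. -/

import Mathlib

/-- The vertices of the truncated tetrahedron: the 12 points of `ℤ^3` that are
coordinate permutations of `(±1, ±1, ±3)` whose product of coordinates is positive. -/
def TrTetraVertex (v : Fin 3 → ℤ) : Prop :=
  (∃ σ : Equiv.Perm (Fin 3), |v (σ 0)| = 1 ∧ |v (σ 1)| = 1 ∧ |v (σ 2)| = 3) ∧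
    0 < v 0 * v 1 * v 2

/-- The truncated tetrahedron graph: vertices as above, adjacent iff the squared
Euclidean distance equals 8. -/
def truncatedTetrahedronGraph : SimpleGraph {v : Fin 3 → ℤ // TrTetraVertex v} :=
  SimpleGraph.fromRel (fun v w => ∑ i, (v.val i - w.val i) ^ 2 = 8)

/-!
The real line is 5-gonal: for `p ≤ q ≤ r`, the pairwise distances of `p, q, r` add up to
`2 (r - p)`, which each of `s` and `t` pays for by the triangle inequality through `p` and `r`,
while `|s - t|` is paid for through the median `q`. Summing over coordinates, every `ℓ₁`-metric
is 5-gonal, and so is every metric admitting a scaled embedding into some `ℤⁿ`.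

In the truncated tetrahedron take `a = (-1,-1,3)`, `b = (-1,3,-1)`, `c = (3,-1,-1)`,
`x = (-3,-1,1)`, `y = (1,3,1)`. The pairs `xy, ab, ac, bc` are neither adjacent nor have a
common neighbour, so they are at distance at least `3`, while explicit walks bound the distances
from `x` and `y` to `a, b, c` by `1, 2, 3` and `2, 1, 2`: the 5-gonal inequality fails, `11 < 12`.
-/

section FiveGonal

variable {α : Type*} [CommRing α] [LinearOrder α] [IsStrictOrderedRing α]

theorem abs_sub_five_gonal (p q r s t : α) :
    |s - t| + |p - q| + |p - r| + |q - r| ≤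
      |s - p| + |s - q| + |s - r| + |t - p| + |t - q| + |t - r| := by
  wlog hpq : p ≤ q generalizing p q
  · linarith [this q p (le_of_not_ge hpq), abs_sub_comm p q]
  wlog hqr : q ≤ r generalizing p q r
  · rcases le_total p r with hpr | hrp
    · linarith [this (p := p) (q := r) (r := q) hpr (le_of_not_ge hqr), abs_sub_comm q r]
    · linarith [this (p := r) (q := p) (r := q) hrp hpq, abs_sub_comm p r, abs_sub_comm q r,
        abs_sub_comm p q]
  have hs : r - p ≤ |s - p| + |s - r| := by
    linarith [le_abs_self (r - p), abs_sub_le r s p, abs_sub_comm r s]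
  have ht : r - p ≤ |t - p| + |t - r| := by
    linarith [le_abs_self (r - p), abs_sub_le r t p, abs_sub_comm r t]
  have hst : |s - t| ≤ |s - q| + |t - q| := by
    linarith [abs_sub_le s q t, abs_sub_comm q t]
  rw [abs_sub_comm p q, abs_sub_comm p r, abs_sub_comm q r, abs_of_nonneg (sub_nonneg.2 hpq),
    abs_of_nonneg (sub_nonneg.2 (hpq.trans hqr)), abs_of_nonneg (sub_nonneg.2 hqr)]
  linarith

end FiveGonal

theorem five_gonal_of_scaled_l1_embedding {V ι : Type*} [Fintype ι] {d : V → V → ℕ} {lam : ℕ}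
    (hlam : 0 < lam) {f : V → ι → ℤ} (hf : ∀ u v, (lam : ℤ) * d u v = ∑ i, |f u i - f v i|)
    (a b c x y : V) :
    d x y + d a b + d a c + d b c ≤ d x a + d x b + d x c + d y a + d y b + d y c := by
  have hscaled : (lam : ℤ) * (d x y + d a b + d a c + d b c) ≤
      lam * (d x a + d x b + d x c + d y a + d y b + d y c) := by
    simp only [mul_add, hf, ← Finset.sum_add_distrib]
    exact Finset.sum_le_sum fun i _ => abs_sub_five_gonal (f a i) (f b i) (f c i) (f x i) (f y i)
  exact_mod_cast le_of_mul_le_mul_left hscaled (by positivity)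

theorem SimpleGraph.Reachable.three_le_dist {V : Type*} {G : SimpleGraph V} {u v : V}
    (hr : G.Reachable u v) (hne : u ≠ v) (hnadj : ¬G.Adj u v)
    (hcn : G.commonNeighbors u v = ∅) : 3 ≤ G.dist u v := by
  have h := SimpleGraph.two_lt_edist_iff.2 ⟨hne, hnadj, hcn⟩
  rw [← hr.coe_dist_eq_edist] at h
  exact_mod_cast h

namespace TrTetraVertex

variable {v : Fin 3 → ℤ}

theorem coord_mem (hv : TrTetraVertex v) (i : Fin 3) : v i ∈ ({-3, -1, 1, 3} : Finset ℤ) := by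
  obtain ⟨⟨σ, h0, h1, h2⟩, -⟩ := hv
  obtain ⟨j, rfl⟩ := σ.surjective i
  have habs : |v (σ j)| = 1 ∨ |v (σ j)| = 3 := by fin_cases j <;> simp_all
  rcases habs with h | h <;> rcases (abs_eq (by norm_num)).1 h with h' | h' <;> simp [h']

theorem sum_sq (hv : TrTetraVertex v) : ∑ i, v i ^ 2 = 11 := by
  obtain ⟨⟨σ, h0, h1, h2⟩, -⟩ := hv
  rw [← Equiv.sum_comp σ, Fin.sum_univ_three, ← sq_abs, ← sq_abs (v (σ 1)),
    ← sq_abs (v (σ 2)), h0, h1, h2]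
  norm_num

end TrTetraVertex

namespace truncatedTetrahedronGraph

theorem adj_iff (u v : {v : Fin 3 → ℤ // TrTetraVertex v}) :
    truncatedTetrahedronGraph.Adj u v ↔ ∑ i, (u.val i - v.val i) ^ 2 = 8 := by
  have hsymm : ∑ i, (v.val i - u.val i) ^ 2 = ∑ i, (u.val i - v.val i) ^ 2 :=
    Finset.sum_congr rfl fun i _ => by ring
  refine ⟨fun h => ?_, fun h => ⟨fun huv => ?_, .inl h⟩⟩
  · rcases h.2 with h' | h'
    · exact h'
    · rwa [hsymm] at h'
  · simp [huv] at h

theorem three_le_dist {u v : {v : Fin 3 → ℤ // TrTetraVertex v}}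
    (hr : truncatedTetrahedronGraph.Reachable u v) (hne : u.val ≠ v.val)
    (hnadj : ∑ i, (u.val i - v.val i) ^ 2 ≠ 8)
    -- `a, b, c` range over a finite superset of the vertices, so that `hcn` can be decided.
    (hcn : ∀ a ∈ ({-3, -1, 1, 3} : Finset ℤ), ∀ b ∈ ({-3, -1, 1, 3} : Finset ℤ),
      ∀ c ∈ ({-3, -1, 1, 3} : Finset ℤ), a ^ 2 + b ^ 2 + c ^ 2 = 11 → 0 < a * b * c →
        ∑ i, (u.val i - ![a, b, c] i) ^ 2 = 8 → ∑ i, (v.val i - ![a, b, c] i) ^ 2 ≠ 8) :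
    3 ≤ truncatedTetrahedronGraph.dist u v := by
  refine hr.three_le_dist (fun h => hne (congrArg Subtype.val h)) (by rwa [adj_iff]) ?_
  refine Set.eq_empty_of_forall_notMem fun ⟨w, hw⟩ hmem => ?_
  rw [SimpleGraph.mem_commonNeighbors, adj_iff, adj_iff] at hmem
  have hw3 : ![w 0, w 1, w 2] = w := by ext i; fin_cases i <;> rfl
  have hsq := hw.sum_sq
  rw [Fin.sum_univ_three] at hsq
  exact hcn _ (hw.coord_mem 0) _ (hw.coord_mem 1) _ (hw.coord_mem 2) hsq hw.2
    (by rw [hw3]; exact hmem.1) (by rw [hw3]; exact hmem.2)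

def vertex (v : Fin 3 → ℤ) (hv : TrTetraVertex v := by unfold TrTetraVertex; decide) :
    {v : Fin 3 → ℤ // TrTetraVertex v} :=
  ⟨v, hv⟩

theorem exists_five_gonal_violation :
    ∃ a b c x y : {v : Fin 3 → ℤ // TrTetraVertex v},
      truncatedTetrahedronGraph.dist x a + truncatedTetrahedronGraph.dist x b +
          truncatedTetrahedronGraph.dist x c + truncatedTetrahedronGraph.dist y a +
          truncatedTetrahedronGraph.dist y b + truncatedTetrahedronGraph.dist y c <
        truncatedTetrahedronGraph.dist x y + truncatedTetrahedronGraph.dist a b +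
          truncatedTetrahedronGraph.dist a c + truncatedTetrahedronGraph.dist b c := by
  let a := vertex ![-1, -1, 3]
  let b := vertex ![-1, 3, -1]
  let c := vertex ![3, -1, -1]
  let x := vertex ![-3, -1, 1]
  let y := vertex ![1, 3, 1]
  have adj := fun u v => (adj_iff u v).2
  have hxa : truncatedTetrahedronGraph.Adj x a := adj _ _ (by decide)
  have hyb : truncatedTetrahedronGraph.Adj y b := adj _ _ (by decide)
  let pxb : truncatedTetrahedronGraph.Walk x b :=
    .cons (adj _ (vertex ![-3, 1, -1]) (by decide)) (.cons (adj _ _ (by decide)) .nil)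
  let pxc : truncatedTetrahedronGraph.Walk x c :=
    .cons (adj _ (vertex ![-1, -3, 1]) (by decide))
      (.cons (adj _ (vertex ![1, -3, -1]) (by decide)) (.cons (adj _ _ (by decide)) .nil))
  let pya : truncatedTetrahedronGraph.Walk y a :=
    .cons (adj _ (vertex ![1, 1, 3]) (by decide)) (.cons (adj _ _ (by decide)) .nil)
  let pyc : truncatedTetrahedronGraph.Walk y c :=
    .cons (adj _ (vertex ![3, 1, 1]) (by decide)) (.cons (adj _ _ (by decide)) .nil)
  have hdxa := SimpleGraph.dist_eq_one_iff_adj.2 hxa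
  have hdyb := SimpleGraph.dist_eq_one_iff_adj.2 hyb
  have hdxb : truncatedTetrahedronGraph.dist x b ≤ 2 := truncatedTetrahedronGraph.dist_le pxb
  have hdxc : truncatedTetrahedronGraph.dist x c ≤ 3 := truncatedTetrahedronGraph.dist_le pxc
  have hdya : truncatedTetrahedronGraph.dist y a ≤ 2 := truncatedTetrahedronGraph.dist_le pya
  have hdyc : truncatedTetrahedronGraph.dist y c ≤ 2 := truncatedTetrahedronGraph.dist_le pyc
  have hdxy := three_le_dist (hxa.reachable.trans pya.reachable.symm) (by decide) (by decide)
    (by decide)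
  have hdab := three_le_dist (hxa.reachable.symm.trans pxb.reachable) (by decide) (by decide)
    (by decide)
  have hdac := three_le_dist (hxa.reachable.symm.trans pxc.reachable) (by decide) (by decide)
    (by decide)
  have hdbc := three_le_dist (hyb.reachable.symm.trans pyc.reachable) (by decide) (by decide)
    (by decide)
  exact ⟨a, b, c, x, y, by omega⟩

end truncatedTetrahedronGraph

/-- The truncated tetrahedron graph is not 5-gonal, and consequently
admits no embedding with any scale `λ ≥ 1` into any `ℤ^n`. -/
theorem truncatedTetrahedron_not_five_gonal_not_embeddable :
    (∃ a b c x y : {v : Fin 3 → ℤ // TrTetraVertex v},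
      truncatedTetrahedronGraph.dist x a + truncatedTetrahedronGraph.dist x b +
          truncatedTetrahedronGraph.dist x c + truncatedTetrahedronGraph.dist y a +
          truncatedTetrahedronGraph.dist y b + truncatedTetrahedronGraph.dist y c <
        truncatedTetrahedronGraph.dist x y + truncatedTetrahedronGraph.dist a b +
          truncatedTetrahedronGraph.dist a c + truncatedTetrahedronGraph.dist b c) ∧
    ∀ (n lam : ℕ), 1 ≤ lam →
      ¬ ∃ f : {v : Fin 3 → ℤ // TrTetraVertex v} → Fin n → ℤ,
          ∀ u v, (lam : ℤ) * (truncatedTetrahedronGraph.dist u v : ℤ) =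
            ∑ i, |f u i - f v i| := by
  obtain ⟨a, b, c, x, y, hviolation⟩ := truncatedTetrahedronGraph.exists_five_gonal_violation
  refine ⟨⟨a, b, c, x, y, hviolation⟩, fun n lam hlam ⟨f, hf⟩ => ?_⟩
  exact (five_gonal_of_scaled_l1_embedding hlam hf a b c x y).not_gt hviolation
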